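/- arXiv:1712.05142 — 4 statements merged into one kernel-verified Lean document; each statement's English description precedes it below -/
import Mathlib

section
/- The area of a triangle with vertices v1=(x1,y1), v2=(x2,y2), v3=(x3,y3) given in counter-clockwise order satisfies 2·Area = det of the 3×3 matrix with rows (x1,x2,x3), (y1,y2,y3), (1,1,1). -/
/-!
The triangle with vertices `a, b, c` is the image of the unit triangle with vertices
`0, e₁, e₂` under the affine map `p ↦ a + p.1 • (b - a) + p.2 • (c - a)`. Lebesgue measure
scales under it by the absolute value of the determinant of its linear part, which is the
given `3 × 3` determinant (subtract the first column from the others and expand along the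
last row), and the unit triangle has area `1 / 2` by Fubini.
-/

open MeasureTheory Set Pointwise

theorem volume_region_between_cc_eq_lintegral {α : Type*} [MeasurableSpace α] {μ : Measure α}
    {f g : α → ℝ} {s : Set α} (hf : Measurable f) (hg : Measurable g) (hs : MeasurableSet s) :
    μ.prod volume {p : α × ℝ | p.1 ∈ s ∧ p.2 ∈ Icc (f p.1) (g p.1)} =
      ∫⁻ x in s, ENNReal.ofReal (g x - f x) ∂μ := by
  classical
  rw [Measure.prod_apply (measurableSet_region_between_cc hf hg hs), ← lintegral_indicator hs]
  congr 1 with x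
  by_cases hx : x ∈ s
  · have hslice : Prod.mk x ⁻¹' {p : α × ℝ | p.1 ∈ s ∧ p.2 ∈ Icc (f p.1) (g p.1)} =
        Icc (f x) (g x) := by
      ext; simp [hx]
    rw [hslice, indicator_of_mem hx, Real.volume_Icc]
  · simp [hx, preimage]

theorem convexHull_unitTriangle :
    convexHull ℝ {(0, 0), (1, 0), (0, 1)} = {p : ℝ × ℝ | p.1 ∈ Icc 0 1 ∧ p.2 ∈ Icc 0 (1 - p.1)} := by
  refine (convexHull_min ?_ ?_).antisymm ?_
  · rintro p (rfl | rfl | rfl) <;> norm_num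
  · rintro ⟨a, b⟩ ⟨ha, hb⟩ ⟨a', b'⟩ ⟨ha', hb'⟩ s t hs ht hst
    simp only [mem_Icc] at *
    simp only [Prod.smul_mk, Prod.mk_add_mk, smul_eq_mul, mem_ofPred_eq]
    refine ⟨⟨?_, ?_⟩, ?_, ?_⟩ <;> nlinarith
  · rintro ⟨a, b⟩ ⟨⟨ha, -⟩, hb, hab⟩
    dsimp only at ha hb hab
    have := (convex_convexHull ℝ ({(0, 0), (1, 0), (0, 1)} : Set (ℝ × ℝ))).sum_mem
      (t := Finset.univ) (w := ![1 - a - b, a, b]) (z := ![(0, 0), (1, 0), (0, 1)])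
      (fun i _ => by fin_cases i <;> simp <;> linarith)
      (by simp [Fin.sum_univ_three]; ring)
      (fun i _ => subset_convexHull ℝ _ (by fin_cases i <;> simp))
    simpa [Fin.sum_univ_three] using this

theorem volume_convexHull_unitTriangle :
    volume (convexHull ℝ {(0, 0), (1, 0), (0, 1)} : Set (ℝ × ℝ)) = ENNReal.ofReal (1 / 2) := by
  have h := volume_region_between_cc_eq_lintegral (μ := volume) (s := Icc 0 1)
      (f := fun _ => 0) (g := fun x => 1 - x) measurable_const (by fun_prop) measurableSet_Icc
  simp only [sub_zero] at h
  rw [convexHull_unitTriangle, Measure.volume_eq_prod, h, ← ofReal_integral_eq_lintegral_ofReal]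
  · rw [integral_Icc_eq_integral_Ioc, ← intervalIntegral.integral_of_le zero_le_one,
      intervalIntegral.integral_comp_sub_left (fun x => x)]
    norm_num
  · exact (by fun_prop : Continuous fun x : ℝ => 1 - x).integrableOn_Icc
  · filter_upwards [self_mem_ae_restrict measurableSet_Icc] with x hx
    simp only [Pi.zero_apply]; linarith [hx.2]

theorem convexHull_triple_eq_vadd_image {𝕜 E : Type*} [Field 𝕜] [LinearOrder 𝕜]
    [IsStrictOrderedRing 𝕜] [AddCommGroup E] [Module 𝕜 E] (a b c : E) :
    convexHull 𝕜 {a, b, c} = a +ᵥ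
      ((LinearMap.toSpanSingleton 𝕜 E (b - a)).coprod (LinearMap.toSpanSingleton 𝕜 E (c - a)) ''
        convexHull 𝕜 {(0, 0), (1, 0), (0, 1)}) := by
  rw [LinearMap.image_convexHull, ← convexHull_vadd]
  simp [image_insert_eq, vadd_set_insert]

theorem det_coprod_toSpanSingleton {R : Type*} [CommRing R] (u v : R × R) :
    LinearMap.det ((LinearMap.toSpanSingleton R _ u).coprod (LinearMap.toSpanSingleton R _ v)) =
      u.1 * v.2 - v.1 * u.2 := by
  have : (LinearMap.toSpanSingleton R _ u).coprod (LinearMap.toSpanSingleton R _ v) =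
      Matrix.toLin (Module.Basis.finTwoProd R) (Module.Basis.finTwoProd R)
        !![u.1, v.1; u.2, v.2] := by
    rw [Matrix.toLin_finTwoProd]
    ext <;> simp
  rw [this, LinearMap.det_toLin, Matrix.det_fin_two_of]

theorem Matrix.det_fin_three_of_last_row_one {R : Type*} [CommRing R] (x1 x2 x3 y1 y2 y3 : R) :
    !![x1, x2, x3; y1, y2, y3; 1, 1, 1].det = (x2 - x1) * (y3 - y1) - (x3 - x1) * (y2 - y1) := by
  rw [Matrix.det_fin_three]
  simp only [of_apply, cons_val', cons_val_zero, cons_val_fin_one, cons_val_one, cons_val, mul_one]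
  ring

/-- The area of a triangle with vertices `(x1,y1)`, `(x2,y2)`, `(x3,y3)` in
counter-clockwise order (nonnegative determinant) satisfies
`2·Area = det !![x1,x2,x3; y1,y2,y3; 1,1,1]`. -/
theorem two_mul_triangle_area_eq_det (x1 y1 x2 y2 x3 y3 : ℝ)
    (hccw : 0 ≤ Matrix.det !![x1, x2, x3; y1, y2, y3; 1, 1, 1]) :
    2 * (volume (convexHull ℝ ({(x1, y1), (x2, y2), (x3, y3)} : Set (ℝ × ℝ)))).toReal =
      Matrix.det !![x1, x2, x3; y1, y2, y3; 1, 1, 1] := by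
  rw [Matrix.det_fin_three_of_last_row_one] at hccw ⊢
  rw [convexHull_triple_eq_vadd_image, measure_vadd, Measure.addHaar_image_linearMap,
    det_coprod_toSpanSingleton, volume_convexHull_unitTriangle, ← ENNReal.ofReal_mul (abs_nonneg _),
    ENNReal.toReal_ofReal (by positivity)]
  simp only [Prod.fst_sub, Prod.snd_sub]
  rw [abs_of_nonneg hccw]
  ring
end

section
/- Correctness of the addition gadget: let p0, x, y, z, q1, q2 be points in ℝ² with p0, x, y, z collinear on a line ℓ, z ≠ p0, such that the triangles (p0,x,q1) and (y,z,q1) have equal (nonzero) area and the triangles (p0,y,q2) and (x,z,q2) have equal (nonzero) area, where q1 and q2 do not lie on ℓ. Identifying each point w on ℓ with its signed coordinate along ℓ with origin p0, it follows that z = x + y. -/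
/-- Cross product of two planar vectors. -/
def cr (u v : ℝ × ℝ) : ℝ := u.1 * v.2 - u.2 * v.1

/-- Unsigned area of the triangle with vertices `a`, `b`, `c` in ℝ². -/
noncomputable def triArea (a b c : ℝ × ℝ) : ℝ := |cr (b - a) (c - a)| / 2

/- A triangle with base `[p + s u, p + t u]` on the line and apex `q` has area
`|t - s| * |cr u (q - p)| / 2`, so equal nonzero areas over a common apex force equal base
lengths: `|X| = |Z - Y|` and `|Y| = |Z - X|`. Every choice of signs in these two equations
gives `Z = X + Y`, except `X = Y - Z, Y = X - Z`, which gives `Z = 0`. -/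

theorem triArea_add_smul_add_smul (p u q : ℝ × ℝ) (s t : ℝ) :
    triArea (p + s • u) (p + t • u) q = |t - s| * |cr u (q - p)| / 2 := by
  rw [triArea, ← abs_mul]
  congr 2
  simp only [cr, Prod.fst_sub, Prod.snd_sub, Prod.fst_add, Prod.snd_add,
    Prod.smul_fst, Prod.smul_snd, smul_eq_mul]
  ring

theorem abs_sub_eq_of_triArea_eq {p u q : ℝ × ℝ} {s t s' t' : ℝ}
    (h : triArea (p + s • u) (p + t • u) q = triArea (p + s' • u) (p + t' • u) q)
    (hne : triArea (p + s • u) (p + t • u) q ≠ 0) :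
    |t - s| = |t' - s'| := by
  simp only [triArea_add_smul_add_smul] at h hne
  have hc : |cr u (q - p)| ≠ 0 := fun hc => hne (by rw [hc, mul_zero, zero_div])
  exact mul_right_cancel₀ hc (by linarith)

theorem eq_add_of_abs_sub_eq_of_abs_sub_eq {X Y Z : ℝ} (hZ : Z ≠ 0)
    (h1 : |X| = |Z - Y|) (h2 : |Y| = |Z - X|) : Z = X + Y := by
  rcases abs_eq_abs.mp h1 with h1 | h1 <;> rcases abs_eq_abs.mp h2 with h2 | h2
  all_goals first | linarith | exact absurd (by linarith) hZ

theorem addition_gadget_general (p0 q1 q2 u : ℝ × ℝ)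
    (X Y Z : ℝ) (hZ : Z ≠ 0)
    (x y z : ℝ × ℝ)
    (hx : x = p0 + X • u) (hy : y = p0 + Y • u) (hz : z = p0 + Z • u)
    (h1 : triArea p0 x q1 = triArea y z q1) (h1' : triArea p0 x q1 ≠ 0)
    (h2 : triArea p0 y q2 = triArea x z q2) (h2' : triArea p0 y q2 ≠ 0) :
    Z = X + Y := by
  subst hx hy hz
  have hXY : |X - 0| = |Z - Y| :=
    abs_sub_eq_of_triArea_eq (p := p0) (by simpa using h1) (by simpa using h1')
  have hYX : |Y - 0| = |Z - X| :=
    abs_sub_eq_of_triArea_eq (p := p0) (by simpa using h2) (by simpa using h2')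
  rw [sub_zero] at hXY hYX
  exact eq_add_of_abs_sub_eq_of_abs_sub_eq hZ hXY hYX

/-- Correctness of the addition gadget: let `p0, x, y, z` be points on the line `ℓ`
through `p0` with unit direction `u` (with signed coordinates `0, X, Y, Z`, all of
`x, y, z` distinct from `p0`), and let `q1, q2` be points not on `ℓ`.  If the triangles
`(p0,x,q1)` and `(y,z,q1)` have equal nonzero area and the triangles `(p0,y,q2)` and
`(x,z,q2)` have equal nonzero area, then `Z = X + Y`. -/
theorem addition_gadget (p0 q1 q2 u : ℝ × ℝ) (hu : ‖u‖ = 1)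
    (X Y Z : ℝ) (hX : X ≠ 0) (hY : Y ≠ 0) (hZ : Z ≠ 0)
    (x y z : ℝ × ℝ)
    (hx : x = p0 + X • u) (hy : y = p0 + Y • u) (hz : z = p0 + Z • u)
    (hq1 : ∀ t : ℝ, q1 ≠ p0 + t • u) (hq2 : ∀ t : ℝ, q2 ≠ p0 + t • u)
    (h1 : triArea p0 x q1 = triArea y z q1) (h1' : triArea p0 x q1 ≠ 0)
    (h2 : triArea p0 y q2 = triArea x z q2) (h2' : triArea p0 y q2 ≠ 0) :
    Z = X + Y :=
  addition_gadget_general p0 q1 q2 u X Y Z hZ x y z hx hy hz h1 h1' h2 h2'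
end

section
/- Intercept theorem for the multiplication gadget: let p0, p1, x, y, z be points on a line ℓ in ℝ² and p, p' be points on another line through p0 distinct from ℓ, all different from p0. If the line through p1 and p is parallel to the line through y and p', and the line through x and p is parallel to the line through z and p', then, writing X, Y, Z, 1 for the signed coordinates of x, y, z, p1 along ℓ with origin p0, we have X·Y = Z. -/
lemma cr_smul_sub_smul (u w : ℝ × ℝ) (a b c d : ℝ) :
    cr (a • w - b • u) (c • w - d • u) = (a * d - b * c) * cr u w := by
  simp only [cr, Prod.fst_sub, Prod.snd_sub, Prod.smul_fst, Prod.smul_snd, smul_eq_mul]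
  ring

lemma mul_eq_mul_of_cr_eq_zero {p0 u w : ℝ × ℝ} (hind : cr u w ≠ 0) {a b c d : ℝ}
    (h : cr (p0 + a • w - (p0 + b • u)) (p0 + c • w - (p0 + d • u)) = 0) :
    a * d = b * c := by
  rw [add_sub_add_left_eq_sub, add_sub_add_left_eq_sub, cr_smul_sub_smul] at h
  exact sub_eq_zero.1 ((mul_eq_zero.1 h).resolve_right hind)

theorem intercept_multiplication_general (p0 u w : ℝ × ℝ) (hind : cr u w ≠ 0)
    (X Y Z s t : ℝ) (hs : s ≠ 0)
    (p1 x y z p p' : ℝ × ℝ)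
    (hp1 : p1 = p0 + (1 : ℝ) • u)
    (hx : x = p0 + X • u) (hy : y = p0 + Y • u) (hz : z = p0 + Z • u)
    (hp : p = p0 + s • w) (hp' : p' = p0 + t • w)
    (hpar1 : cr (p - p1) (p' - y) = 0)
    (hpar2 : cr (p - x) (p' - z) = 0) :
    X * Y = Z := by
  subst hp1 hx hy hz hp hp'
  have hsY : s * Y = 1 * t := mul_eq_mul_of_cr_eq_zero hind hpar1
  have hsZ : s * Z = X * t := mul_eq_mul_of_cr_eq_zero hind hpar2
  exact mul_left_cancel₀ hs (by linear_combination X * hsY - hsZ)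

/-- Intercept theorem for the multiplication gadget: let `p0, p1, x, y, z` be points on
the line `ℓ` through `p0` with unit direction `u` (signed coordinates `0, 1, X, Y, Z`),
and let `p, p'` be points (distinct from `p0`) on another line through `p0` with
direction `w` not parallel to `u`.  If the line through `p1, p` is parallel to the line
through `y, p'`, and the line through `x, p` is parallel to the line through `z, p'`,
then `X·Y = Z`. -/
theorem intercept_multiplication (p0 u w : ℝ × ℝ) (hu : ‖u‖ = 1) (hind : cr u w ≠ 0)
    (X Y Z s t : ℝ) (hX : X ≠ 0) (hY : Y ≠ 0) (hZ : Z ≠ 0) (hs : s ≠ 0) (ht : t ≠ 0)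
    (p1 x y z p p' : ℝ × ℝ)
    (hp1 : p1 = p0 + (1 : ℝ) • u)
    (hx : x = p0 + X • u) (hy : y = p0 + Y • u) (hz : z = p0 + Z • u)
    (hp : p = p0 + s • w) (hp' : p' = p0 + t • w)
    (hpar1 : cr (p - p1) (p' - y) = 0)
    (hpar2 : cr (p - x) (p' - z) = 0) :
    X * Y = Z :=
  intercept_multiplication_general p0 u w hind X Y Z s t hs p1 x y z p p' hp1 hx hy hz hp hp' hpar1
    hpar2
end

section
/- Coplanarity via connectedness: let T be a plane triangulation drawn in ℝ³ (a map from vertices of T to points in ℝ³). Define the coplanar graph on the inner faces of T, with an edge between two faces adjacent in T whenever their vertex sets lie in a common plane. If the coplanar graph is connected and every face spans a plane (its three vertices are affinely independent), then all vertices of T lie in a common plane. -/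
/-!
Two non-collinear sets with coplanar union have the same affine span, so the plane spanned by a
face is constant along the edges of the coplanar graph, hence by connectedness the same plane for
every face. Every vertex lies on some face, so all vertices lie in that plane.
-/

namespace SimpleGraph

variable {V α : Type*} {G : SimpleGraph V}

theorem Reachable.apply_eq_of_forall_adj {φ : V → α} (hφ : ∀ u v, G.Adj u v → φ u = φ v)
    {u v : V} (h : G.Reachable u v) : φ u = φ v := by
  obtain ⟨w⟩ := h
  induction w with
  | nil => rfl
  | cons hadj _ ih => exact (hφ _ _ hadj).trans ih

end SimpleGraph

section Affine

variable {k V P ι : Type*} [DivisionRing k] [AddCommGroup V] [Module k V] [AddTorsor V P]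

theorem Coplanar.affineSpan_eq_of_subset_of_not_collinear {s t : Set P} (hs : Coplanar k s)
    (hts : t ⊆ s) (ht : ¬ Collinear k t) : affineSpan k t = affineSpan k s := by
  have := hs.finiteDimensional_vectorSpan
  have hle : vectorSpan k t ≤ vectorSpan k s := vectorSpan_mono k hts
  have : FiniteDimensional k (vectorSpan k t) := Submodule.finiteDimensional_of_le hle
  have htwo : 2 ≤ Module.finrank k (vectorSpan k t) := by
    rw [collinear_iff_finrank_le_one] at ht
    omega
  have hdir : vectorSpan k t = vectorSpan k s :=
    Submodule.eq_of_le_of_finrank_le hle (hs.finrank_le_two.trans htwo)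
  obtain ⟨p, hp⟩ : t.Nonempty :=
    Set.nonempty_iff_ne_empty.2 (by rintro rfl; exact ht (collinear_empty k P))
  refine AffineSubspace.eq_of_direction_eq_of_nonempty_of_le ?_ ⟨p, subset_affineSpan k t hp⟩
    (affineSpan_mono k hts)
  rw [direction_affineSpan, direction_affineSpan, hdir]

theorem affineSpan_eq_of_coplanar_union {s t : Set P} (hs : ¬ Collinear k s)
    (ht : ¬ Collinear k t) (h : Coplanar k (s ∪ t)) : affineSpan k s = affineSpan k t :=
  (h.affineSpan_eq_of_subset_of_not_collinear Set.subset_union_left hs).trans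
    (h.affineSpan_eq_of_subset_of_not_collinear Set.subset_union_right ht).symm

theorem Coplanar.of_subset_affineSpan {s t : Set P} (hs : Coplanar k s)
    (hts : t ⊆ affineSpan k s) : Coplanar k t := by
  have hle : vectorSpan k t ≤ vectorSpan k s := by
    simpa only [← AffineSubspace.direction_eq_vectorSpan, direction_affineSpan] using
      vectorSpan_mono k hts
  exact (Submodule.rank_mono hle).trans hs

theorem coplanar_image_of_card_eq_three (p : ι → P) {s : Finset ι} (hs : s.card = 3) :
    Coplanar k (p '' s) := by
  classical
  obtain ⟨a, b, c, -, -, -, rfl⟩ := Finset.card_eq_three.mp hs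
  simpa only [Finset.coe_insert, Finset.coe_singleton, Set.image_insert_eq,
    Set.image_singleton] using coplanar_triple k (p a) (p b) (p c)

end Affine

/-- Coplanarity via connectedness of the coplanar graph: let `T` be a plane
triangulation with inner (triangular) faces `faces`, drawn in ℝ³ via the vertex
placement `D`, such that every vertex lies on some face and every face spans a plane
(its three vertices are not collinear).  The coplanar graph `CG` has the faces as
vertices, two faces being adjacent whenever they share an edge (two vertices) and the
images of their vertices lie in a common plane.  If `CG` is connected, then all
vertices of `T` lie in a common plane. -/
theorem coplanar_of_coplanarGraph_connected (n : ℕ) (faces : Finset (Finset (Fin n)))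
    (hcard : ∀ f ∈ faces, f.card = 3)
    (D : Fin n → EuclideanSpace ℝ (Fin 3))
    (hnd : ∀ f ∈ faces, ¬ Collinear ℝ (D '' (f : Set (Fin n))))
    (hcover : ∀ v : Fin n, ∃ f ∈ faces, v ∈ f)
    (CG : SimpleGraph {f // f ∈ faces})
    (hCG : ∀ f g : {f // f ∈ faces}, CG.Adj f g ↔
      f ≠ g ∧ (f.1 ∩ g.1).card = 2 ∧ Coplanar ℝ (D '' ((f.1 ∪ g.1 : Finset (Fin n)) : Set (Fin n))))
    (hconn : CG.Connected) :
    Coplanar ℝ (Set.range D) := by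
  obtain ⟨f₀⟩ := hconn.nonempty
  have hplane : ∀ f : {f // f ∈ faces},
      affineSpan ℝ (D '' f.1) = affineSpan ℝ (D '' f₀.1) := by
    refine fun f ↦ (hconn.preconnected f f₀).apply_eq_of_forall_adj
      (φ := fun f ↦ affineSpan ℝ (D '' f.1)) fun a b hab ↦ ?_
    obtain ⟨-, -, hab⟩ := (hCG a b).mp hab
    rw [Finset.coe_union, Set.image_union] at hab
    exact affineSpan_eq_of_coplanar_union (hnd _ a.2) (hnd _ b.2) hab
  refine (coplanar_image_of_card_eq_three D (hcard _ f₀.2)).of_subset_affineSpan ?_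
  rintro _ ⟨v, rfl⟩
  obtain ⟨f, hf, hv⟩ := hcover v
  rw [← hplane ⟨f, hf⟩]
  exact subset_affineSpan ℝ _ ⟨v, hv, rfl⟩
end
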